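/- arXiv:1912.02820 — 4 statements merged into one kernel-verified Lean document; each statement's English description precedes it below -/
import Mathlib

section
/- Let h be analytic and z ∈ ℂ with h(z) ≠ 0. Define γ(h,z) = sup_{k ≥ 1} |h^{(k)}(z)/(k! h(z))|^{1/k}. If w ∈ ℂ satisfies 4|z−w|·γ(h,z) ≤ 1, then γ(h,w) ≤ 4·γ(h,z). -/
open Complex Metric

def gammaSet (h : ℂ → ℂ) (z : ℂ) : Set ℝ :=
  {x | ∃ k : ℕ, 1 ≤ k ∧ x = ‖iteratedDeriv k h z / ((k.factorial : ℂ) * h z)‖ ^ ((1 : ℝ) / k)}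

/-!
The bound `γ(h, z) ≤ γ` says `‖h⁽ⁿ⁾(z)‖ ≤ n! ‖h z‖ γⁿ`. Expanding `h⁽ᵏ⁾` in its Taylor series at
`z` and summing the majorant `∑ⱼ C(j+k, k) uʲ = (1 - u)^{-(k+1)}`, with `u = ‖w - z‖ γ ≤ 1/4`,
gives `‖h⁽ᵏ⁾(w)‖ ≤ k! ‖h z‖ γᵏ / (1 - u)^{k+1}`, while the geometric tail of the series of `h`
keeps `‖h w‖ ≥ ‖h z‖ (1 - 2u) / (1 - u)`. The quotient is then at most `γᵏ (4/3)ᵏ · 2 ≤ (4γ)ᵏ`.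
-/

open Nat

section GammaSet

variable {h : ℂ → ℂ} {z : ℂ} {γ : ℝ}

theorem nonneg_of_isLUB_gammaSet (hγ : IsLUB (gammaSet h z) γ) : 0 ≤ γ :=
  (Real.rpow_nonneg (norm_nonneg _) _).trans (hγ.1 ⟨1, le_rfl, rfl⟩)

theorem norm_iteratedDeriv_le_of_isLUB_gammaSet (hz : h z ≠ 0) (hγ : IsLUB (gammaSet h z) γ)
    (n : ℕ) : ‖iteratedDeriv n h z‖ ≤ n ! * ‖h z‖ * γ ^ n := by
  rcases Nat.eq_zero_or_pos n with rfl | hn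
  · simp
  have hmem := hγ.1 ⟨n, hn, rfl⟩
  rw [one_div, Real.rpow_inv_le_iff_of_pos (norm_nonneg _) (nonneg_of_isLUB_gammaSet hγ)
    (by positivity), Real.rpow_natCast, norm_div, norm_mul, Complex.norm_natCast,
    div_le_iff₀ (by positivity)] at hmem
  linarith

theorem isLUB_gammaSet_le {ρ : ℝ} (hρ : 0 ≤ ρ)
    (hbound : ∀ k, 1 ≤ k → ‖iteratedDeriv k h z / (k ! * h z)‖ ≤ ρ ^ k)
    (hγ : IsLUB (gammaSet h z) γ) : γ ≤ ρ := by
  refine hγ.2 ?_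
  rintro _ ⟨k, hk, rfl⟩
  rw [one_div, Real.rpow_inv_le_iff_of_pos (norm_nonneg _) hρ (by positivity),
    Real.rpow_natCast]
  exact hbound k hk

end GammaSet

theorem one_le_four_mul_one_sub_pow_mul {u : ℝ} (hu : u ≤ 1 / 4) {k : ℕ}
    (hk : 1 ≤ k) : 1 ≤ (4 * (1 - u)) ^ k * (1 - 2 * u) := by
  have h3 : (3 : ℝ) ≤ (4 * (1 - u)) ^ k :=
    calc (3 : ℝ) = 3 ^ 1 := (pow_one 3).symm
      _ ≤ 3 ^ k := pow_le_pow_right₀ (by norm_num) hk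
      _ ≤ (4 * (1 - u)) ^ k := pow_le_pow_left₀ (by norm_num) (by linarith) k
  nlinarith

section TaylorBounds

variable {f : ℂ → ℂ} {z w : ℂ}

theorem norm_le_of_taylor_coeff_le (hf : Differentiable ℂ f) {b : ℕ → ℝ} {S : ℝ}
    (hbS : HasSum b S) (hb : ∀ n, ‖iteratedDeriv n f z‖ / n ! * ‖w - z‖ ^ n ≤ b n) :
    ‖f w‖ ≤ S := by
  refine (Complex.hasSum_taylorSeries_of_entire hf z w).norm_le_of_bounded hbS fun n => ?_
  rw [norm_smul, norm_smul, norm_inv, norm_pow, Complex.norm_natCast]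
  exact (le_of_eq (by ring)).trans (hb n)

theorem iteratedDeriv_iteratedDeriv (j k : ℕ) :
    iteratedDeriv j (iteratedDeriv k f) = iteratedDeriv (j + k) f := by
  simp only [iteratedDeriv_eq_iterate, Function.iterate_add]; rfl

variable {C r : ℝ}

theorem norm_iteratedDeriv_le_of_coeff_le (hf : Differentiable ℂ f)
    (hcoef : ∀ n, ‖iteratedDeriv n f z‖ ≤ n ! * C * r ^ n) (hr : 0 ≤ r)
    (hu : ‖w - z‖ * r < 1) (k : ℕ) :
    ‖iteratedDeriv k f w‖ ≤ k ! * C * r ^ k / (1 - ‖w - z‖ * r) ^ (k + 1) := by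
  have hfk : Differentiable ℂ (iteratedDeriv k f) :=
    (hf.contDiff (n := ⊤)).differentiable_iteratedDeriv k (by exact_mod_cast WithTop.coe_lt_top _)
  have hu' : ‖‖w - z‖ * r‖ < 1 := by rwa [Real.norm_of_nonneg (by positivity)]
  have hsum := (hasSum_choose_mul_geometric_of_norm_lt_one k hu').mul_right (k ! * C * r ^ k)
  rw [one_div_mul_eq_div] at hsum
  refine norm_le_of_taylor_coeff_le (z := z) hfk hsum fun j => ?_
  have hfact : ((j + k) ! : ℝ) = (j + k).choose k * k ! * j ! := by
    exact_mod_cast (Nat.add_choose_mul_factorial_mul_factorial j k).symm.trans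
      (Nat.mul_right_comm _ _ _)
  rw [iteratedDeriv_iteratedDeriv]
  calc ‖iteratedDeriv (j + k) f z‖ / j ! * ‖w - z‖ ^ j
      ≤ (j + k) ! * C * r ^ (j + k) / j ! * ‖w - z‖ ^ j := by gcongr; exact hcoef _
    _ = (j + k).choose k * (‖w - z‖ * r) ^ j * (k ! * C * r ^ k) := by
      rw [hfact]; field_simp; ring

theorem norm_sub_le_of_coeff_le (hf : Differentiable ℂ f)
    (hcoef : ∀ n, ‖iteratedDeriv n f z‖ ≤ n ! * C * r ^ n) (hr : 0 ≤ r)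
    (hu : ‖w - z‖ * r < 1) :
    ‖f w - f z‖ ≤ C * (‖w - z‖ * r) / (1 - ‖w - z‖ * r) := by
  set u := ‖w - z‖ * r
  have hsum := ((hasSum_geometric_of_lt_one (by positivity) hu).mul_left C).sub
    (hasSum_ite_eq 0 C)
  have hS : C * (1 - u)⁻¹ - C = C * u / (1 - u) := by
    field_simp [(sub_pos.2 hu).ne']; ring
  rw [hS] at hsum
  have hg : Differentiable ℂ fun x => -f z + f x := (differentiable_const _).add hf
  rw [sub_eq_neg_add]
  refine norm_le_of_taylor_coeff_le (z := z) hg hsum fun n => ?_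
  rcases Nat.eq_zero_or_pos n with rfl | hn
  · simp
  · rw [iteratedDeriv_const_add hn, if_neg hn.ne', sub_zero, mul_pow, ← mul_assoc]
    calc ‖iteratedDeriv n f z‖ / n ! * ‖w - z‖ ^ n
        ≤ n ! * C * r ^ n / n ! * ‖w - z‖ ^ n := by gcongr; exact hcoef _
      _ = C * ‖w - z‖ ^ n * r ^ n := by field_simp

end TaylorBounds

theorem stmt0 (h : ℂ → ℂ) (z w : ℂ) (hdiff : Differentiable ℂ h) (hz : h z ≠ 0)
    (γz γw : ℝ) (hγz : IsLUB (gammaSet h z) γz) (hγw : IsLUB (gammaSet h w) γw)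
    (hcond : 4 * ‖z - w‖ * γz ≤ 1) : γw ≤ 4 * γz := by
  have hγ0 := nonneg_of_isLUB_gammaSet hγz
  have hcoef := norm_iteratedDeriv_le_of_isLUB_gammaSet hz hγz
  set u := ‖w - z‖ * γz
  have hu : u ≤ 1 / 4 := by rw [norm_sub_rev] at hcond; linarith
  have hu1 : u < 1 := by linarith
  have hhw : ‖h z‖ * (1 - 2 * u) / (1 - u) ≤ ‖h w‖ := by
    have hdist := norm_sub_le_of_coeff_le hdiff hcoef hγ0 hu1
    have hrev : ‖h z‖ - ‖h w‖ ≤ ‖h w - h z‖ := norm_sub_rev (h z) (h w) ▸ norm_sub_norm_le _ _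
    calc ‖h z‖ * (1 - 2 * u) / (1 - u) = ‖h z‖ - ‖h z‖ * u / (1 - u) := by
          field_simp [(sub_pos.2 hu1).ne']; ring
      _ ≤ ‖h w‖ := by linarith
  refine isLUB_gammaSet_le (by positivity) (fun k hk => ?_) hγw
  rw [norm_div, norm_mul, Complex.norm_natCast]
  refine div_le_of_le_mul₀ (by positivity) (by positivity) ?_
  calc ‖iteratedDeriv k h w‖ ≤ k ! * ‖h z‖ * γz ^ k / (1 - u) ^ (k + 1) :=
        norm_iteratedDeriv_le_of_coeff_le hdiff hcoef hγ0 hu1 k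
    _ ≤ (4 * γz) ^ k * (k ! * (‖h z‖ * (1 - 2 * u) / (1 - u))) := by
        rw [div_le_iff₀ (pow_pos (sub_pos.2 hu1) _)]
        calc k ! * ‖h z‖ * γz ^ k = k ! * ‖h z‖ * γz ^ k * 1 := (mul_one _).symm
          _ ≤ k ! * ‖h z‖ * γz ^ k * ((4 * (1 - u)) ^ k * (1 - 2 * u)) := by
              gcongr; exact one_le_four_mul_one_sub_pow_mul hu hk
          _ = _ := by simp only [mul_pow]; field_simp [(sub_pos.2 hu1).ne']; ring
    _ ≤ (4 * γz) ^ k * (k ! * ‖h w‖) := by gcongr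
end

section
/- Let h be analytic with h(z) ≠ 0 and set u = |z−w|·γ(h,z), where γ(h,z) = sup_{k ≥ 1} |h^{(k)}(z)/(k! h(z))|^{1/k}. If u < 1, then 1 − u/(1−u) ≤ |h(w)/h(z)| ≤ 1/(1−u). -/
open Complex Metric

/-!
Dividing the Taylor expansion of `h` at `z` by `h z` gives
`h w / h z = 1 + ∑_{k ≥ 1} (h⁽ᵏ⁾(z) / (k! h(z))) (w - z)ᵏ`, and by definition of `γ` the `k`-th
term has norm at most `uᵏ`. Hence `‖h w / h z - 1‖ ≤ ∑_{k ≥ 1} uᵏ = u / (1 - u)`, and both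
bounds follow from the triangle inequality, since `1 + u / (1 - u) = 1 / (1 - u)`.
-/

theorem norm_sub_le_of_hasSum_of_norm_le_pow {E : Type*} [SeminormedAddCommGroup E]
    {f : ℕ → E} {s : E} {u : ℝ} (hf : HasSum f s) (hu₀ : 0 ≤ u) (hu₁ : u < 1)
    (hbound : ∀ n, ‖f (n + 1)‖ ≤ u ^ (n + 1)) :
    ‖s - f 0‖ ≤ u / (1 - u) := by
  have htail : HasSum (fun n ↦ f (n + 1)) (s - f 0) := by
    simpa using (hasSum_nat_add_iff' 1).mpr hf
  have hgeom : HasSum (fun n : ℕ ↦ u ^ (n + 1)) (u / (1 - u)) := by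
    simpa [pow_succ', div_eq_mul_inv] using (hasSum_geometric_of_lt_one hu₀ hu₁).mul_left u
  exact htail.norm_le_of_bounded hgeom hbound

theorem nonneg_of_mem_upperBounds_gammaSet {h : ℂ → ℂ} {z : ℂ} {γ : ℝ}
    (hγ : γ ∈ upperBounds (gammaSet h z)) : 0 ≤ γ :=
  le_trans (by positivity) (hγ ⟨1, le_rfl, rfl⟩)

theorem norm_iteratedDeriv_div_le_pow {h : ℂ → ℂ} {z : ℂ} {γ : ℝ}
    (hγ : γ ∈ upperBounds (gammaSet h z)) {k : ℕ} (hk : 1 ≤ k) :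
    ‖iteratedDeriv k h z / ((k.factorial : ℂ) * h z)‖ ≤ γ ^ k := by
  have hroot := hγ ⟨k, hk, rfl⟩
  rw [one_div, Real.rpow_inv_le_iff_of_pos (norm_nonneg _) (nonneg_of_mem_upperBounds_gammaSet hγ)
    (by positivity), Real.rpow_natCast] at hroot
  exact hroot

theorem hasSum_taylorSeries_div {h : ℂ → ℂ} {z w : ℂ} {R : ℝ}
    (hdiff : DifferentiableOn ℂ h (ball z R)) (hw : w ∈ ball z R) :
    HasSum (fun n : ℕ ↦ iteratedDeriv n h z / ((n.factorial : ℂ) * h z) * (w - z) ^ n)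
      (h w / h z) := by
  convert (Complex.hasSum_taylorSeries_on_ball hdiff hw).div_const (h z) using 2 with n
  · rfl
  rw [smul_eq_mul, smul_eq_mul]
  ring

theorem stmt1_general (h : ℂ → ℂ) (z w : ℂ) (R : ℝ) (hw : w ∈ ball z R)
    (hdiff : DifferentiableOn ℂ h (ball z R)) (hz : h z ≠ 0)
    (γ : ℝ) (hγ : IsLUB (gammaSet h z) γ)
    (hu : ‖z - w‖ * γ < 1) :
    1 - (‖z - w‖ * γ) / (1 - ‖z - w‖ * γ) ≤ ‖h w / h z‖ ∧
      ‖h w / h z‖ ≤ 1 / (1 - ‖z - w‖ * γ) := by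
  set u := ‖z - w‖ * γ
  have hu₀ : 0 ≤ u := mul_nonneg (norm_nonneg _) (nonneg_of_mem_upperBounds_gammaSet hγ.1)
  have hdist : ‖h w / h z - 1‖ ≤ u / (1 - u) := by
    have hterm (n : ℕ) :
        ‖iteratedDeriv (n + 1) h z / (((n + 1).factorial : ℂ) * h z) * (w - z) ^ (n + 1)‖ ≤
          u ^ (n + 1) := by
      rw [norm_mul, norm_pow, norm_sub_rev, mul_pow, mul_comm (‖z - w‖ ^ (n + 1))]
      gcongr
      exact norm_iteratedDeriv_div_le_pow hγ.1 n.succ_pos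
    simpa [div_self hz] using
      norm_sub_le_of_hasSum_of_norm_le_pow (hasSum_taylorSeries_div hdiff hw) hu₀ hu hterm
  have hnorm := abs_le.mp ((abs_norm_sub_norm_le (h w / h z) 1).trans hdist)
  have hsum : 1 / (1 - u) = 1 + u / (1 - u) := by field_simp [(sub_pos.mpr hu).ne']; ring
  rw [norm_one] at hnorm
  constructor <;> linarith

theorem stmt1 (h : ℂ → ℂ) (z w : ℂ) (R : ℝ) (hR : 0 < R) (hw : w ∈ ball z R)
    (hdiff : DifferentiableOn ℂ h (ball z R)) (hz : h z ≠ 0)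
    (γ : ℝ) (hγ : IsLUB (gammaSet h z) γ)
    (hu : ‖z - w‖ * γ < 1) :
    1 - (‖z - w‖ * γ) / (1 - ‖z - w‖ * γ) ≤ ‖h w / h z‖ ∧
      ‖h w / h z‖ ≤ 1 / (1 - ‖z - w‖ * γ) :=
  stmt1_general h z w R hw hdiff hz γ hγ hu
end

section
/- For the exponential function f(z) = e^z and any α ∈ ℂ, the radius of univalence R of g(z) = (z−α)e^z around α satisfies R ≥ e^{−φ}·φ/(1+φ) where φ = (√5−1)/2. In particular, there is an absolute constant c > 0 such that g is injective on D(α, c) for every α. -/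
open Complex Metric

/- With `w = z - α`, the derivative of `g z = (z - α) e^z` is `e^α (1 + w) e^w`, which
differs from `g'(α) = e^α` by at most `|e^α| ((1 + |w|) e^|w| - 1)`. On a disc where this is
`< |e^α|`, the map `g - g'(α) · id` is Lipschitz with constant `< |g'(α)|`, so `g` is injective.
Since `e^φ ≥ 1 + φ`, every radius `e^(-φ) φ / (1 + φ)` with `φ ≥ 0` is at most
`φ / (1 + φ)² ≤ 1/4`, and `(1 + 1/4) e^(1/4) < 2`. -/

theorem Convex.injOn_of_norm_hasDerivWithinAt_sub_le {𝕜 G : Type*} [RCLike 𝕜]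
    [NormedAddCommGroup G] [NormedSpace 𝕜 G] {f f' : 𝕜 → G} {s : Set 𝕜} {c : G} {C : ℝ}
    (hs : Convex ℝ s) (hf : ∀ x ∈ s, HasDerivWithinAt f (f' x) s x)
    (bound : ∀ x ∈ s, ‖f' x - c‖ ≤ C) (hC : C < ‖c‖) : Set.InjOn f s := by
  intro x hx y hy hxy
  have lipschitz : ‖(f y - y • c) - (f x - x • c)‖ ≤ C * ‖y - x‖ :=
    hs.norm_image_sub_le_of_norm_hasDerivWithin_le
      (fun z hz => (hf z hz).sub ((hasDerivWithinAt_id z s).smul_const c)) (by simpa using bound)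
      hx hy
  rw [hxy, sub_sub_sub_cancel_left, ← sub_smul, norm_smul, norm_sub_rev] at lipschitz
  have : ‖y - x‖ = 0 := by nlinarith [norm_nonneg (y - x)]
  exact (sub_eq_zero.1 (norm_eq_zero.1 this)).symm

theorem Complex.norm_one_add_mul_exp_sub_one_le (w : ℂ) :
    ‖(1 + w) * exp w - 1‖ ≤ (1 + ‖w‖) * Real.exp ‖w‖ - 1 := by
  have h_exp_sub_one : ‖exp w - 1‖ ≤ Real.exp ‖w‖ - 1 := by
    simpa using norm_exp_sub_sum_le_exp_norm_sub_sum w 1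
  have h_mul_exp : ‖w * exp w‖ ≤ ‖w‖ * Real.exp ‖w‖ := by
    rw [norm_mul]
    gcongr
    exact norm_exp_le_exp_norm w
  calc ‖(1 + w) * exp w - 1‖ = ‖(exp w - 1) + w * exp w‖ := by ring_nf
    _ ≤ (Real.exp ‖w‖ - 1) + ‖w‖ * Real.exp ‖w‖ :=
      (norm_add_le _ _).trans (add_le_add h_exp_sub_one h_mul_exp)
    _ = (1 + ‖w‖) * Real.exp ‖w‖ - 1 := by ring

theorem hasDerivAt_sub_mul_exp (α z : ℂ) :
    HasDerivAt (fun z => (z - α) * exp z) ((1 + (z - α)) * exp z) z :=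
  (((hasDerivAt_id z).sub_const α).mul (hasDerivAt_exp z)).congr_deriv (by simp [add_mul])

theorem injOn_sub_mul_exp_ball (α : ℂ) {r : ℝ} (hr : (1 + r) * Real.exp r < 2) :
    Set.InjOn (fun z => (z - α) * exp z) (ball α r) := by
  refine (convex_ball α r).injOn_of_norm_hasDerivWithinAt_sub_le (c := exp α)
    (C := ‖exp α‖ * ((1 + r) * Real.exp r - 1))
    (fun z _ => (hasDerivAt_sub_mul_exp α z).hasDerivWithinAt) (fun z hz => ?_) ?_
  · have hw : ‖z - α‖ < r := mem_ball_iff_norm.1 hz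
    have hderiv : (1 + (z - α)) * exp z - exp α = exp α * ((1 + (z - α)) * exp (z - α) - 1) := by
      rw [exp_sub]; field_simp
    rw [hderiv, norm_mul]
    gcongr
    refine (norm_one_add_mul_exp_sub_one_le _).trans ?_
    have : 0 ≤ 1 + r := by linarith [norm_nonneg (z - α)]
    gcongr
  · have : 0 < ‖exp α‖ := norm_pos_iff.2 (exp_ne_zero α)
    nlinarith

theorem one_add_quarter_mul_exp_quarter_lt_two : (1 + 1 / 4 : ℝ) * Real.exp (1 / 4) < 2 := by
  have := Real.exp_bound_div_one_sub_of_interval' (x := 1 / 4) (by norm_num) (by norm_num)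
  nlinarith

theorem exp_neg_mul_div_one_add_le_quarter {φ : ℝ} (hφ : 0 ≤ φ) :
    Real.exp (-φ) * φ / (1 + φ) ≤ 1 / 4 := by
  have h_exp : Real.exp (-φ) * (1 + φ) ≤ 1 := by
    rw [Real.exp_neg, inv_mul_le_one₀ (Real.exp_pos φ), add_comm]
    exact Real.add_one_le_exp φ
  rw [div_le_iff₀ (by positivity)]
  nlinarith [sq_nonneg (1 - φ), Real.exp_pos (-φ)]

theorem stmt12 (α : ℂ) (φ : ℝ) (hφ : φ = (Real.sqrt 5 - 1) / 2) :
    Set.InjOn (fun z => (z - α) * Complex.exp z) (ball α (Real.exp (-φ) * φ / (1 + φ))) := by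
  have hφ_nonneg : 0 ≤ φ := by
    have : 1 ≤ Real.sqrt 5 := Real.one_le_sqrt.2 (by norm_num)
    rw [hφ]; linarith
  exact (injOn_sub_mul_exp_ball α one_add_quarter_mul_exp_quarter_lt_two).mono
    (ball_subset_ball (exp_neg_mul_div_one_add_le_quarter hφ_nonneg))
end

section
/- Let f be a polynomial with root multiset Z(f), let β ∉ Z(f), and let g(z) = (z−β)·f(z). Let τ be any root of g' and S_f(w) = Σ_{α∈Z(f)} 1/|w−α| (counting multiplicity). Then S_f(τ)·|β−τ| ≥ 1. -/
open Complex Metric Polynomial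

namespace Polynomial

theorem eval_derivative_X_sub_C_mul {R : Type*} [CommRing R] (f : R[X]) (β τ : R) :
    (derivative ((X - C β) * f)).eval τ = f.eval τ + (τ - β) * (derivative f).eval τ := by
  simp only [derivative_mul, derivative_sub, derivative_X, derivative_C, sub_zero, one_mul,
    eval_add, eval_mul, eval_sub, eval_X, eval_C]

theorem Splits.norm_eval_derivative_div_eval_le {K : Type*} [NormedField K] {f : K[X]}
    (hf : f.Splits) {τ : K} (hτ : f.eval τ ≠ 0) :
    ‖(derivative f).eval τ / f.eval τ‖ ≤ (f.roots.map fun α => 1 / ‖τ - α‖).sum := by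
  rw [hf.eval_derivative_div_eval_of_ne_zero hτ]
  refine (norm_multiset_sum_le _).trans_eq ?_
  simp only [Multiset.map_map, Function.comp_def, norm_div, norm_one]

end Polynomial

theorem stmt15_general (f : ℂ[X]) (β τ : ℂ)
    (hτf : f.eval τ ≠ 0)
    (hτ : (Polynomial.derivative ((X - Polynomial.C β) * f)).eval τ = 0) :
    1 ≤ (f.roots.map (fun α => 1 / ‖τ - α‖)).sum * ‖β - τ‖ := by
  have hcrit : (β - τ) * ((derivative f).eval τ / f.eval τ) = 1 := by
    rw [eval_derivative_X_sub_C_mul] at hτ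
    field_simp
    linear_combination -hτ
  calc (1 : ℝ) = ‖(derivative f).eval τ / f.eval τ‖ * ‖β - τ‖ := by
        rw [mul_comm, ← norm_mul, hcrit, norm_one]
    _ ≤ (f.roots.map (fun α => 1 / ‖τ - α‖)).sum * ‖β - τ‖ :=
        mul_le_mul_of_nonneg_right
          ((IsAlgClosed.splits f).norm_eval_derivative_div_eval_le hτf) (norm_nonneg _)

theorem stmt15 (f : ℂ[X]) (hf : 0 < f.natDegree) (β τ : ℂ) (hβ : f.eval β ≠ 0)
    (hτf : f.eval τ ≠ 0)
    (hτ : (Polynomial.derivative ((X - Polynomial.C β) * f)).eval τ = 0) :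
    1 ≤ (f.roots.map (fun α => 1 / ‖τ - α‖)).sum * ‖β - τ‖ :=
  stmt15_general f β τ hτf hτ
end
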